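/- arXiv:math/0105027 — 6 statements merged into one kernel-verified Lean document; each statement's English description precedes it below -/
import Mathlib

section
/- The composite linear map ρ_{Σ₊} ∘ ρ_{Σ₋} on ℝ³ has matrix M (with rows (9,4,−8), (4,1,−4), (8,4,−7)) in the standard basis. Consequently MᵀGM = G (M preserves the form B), det M = 1, and for every x ∈ ℝ³ with B(x,x) > 0 and x₁ > 0 one has (Mx)₁ > 0 (M preserves the component of the positive cone containing (1,0,0)). -/
/-- The intersection form of `N = CP² # (−CP²) # (−CP²)` in the basis `S, E₁, E₂`:
`B x y = x₁y₁ − x₂y₂ − x₃y₃`. -/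
def interForm (x y : Fin 3 → ℝ) : ℝ := x 0 * y 0 - x 1 * y 1 - x 2 * y 2

/-- The Gram matrix `G = diag(1, −1, −1)` of the intersection form. -/
def G : Matrix (Fin 3) (Fin 3) ℝ := !![1, 0, 0; 0, -1, 0; 0, 0, -1]

/-- `Σ₊ = (1, 1, 1)`. -/
def SigmaPlus : Fin 3 → ℝ := ![1, 1, 1]

/-- `Σ₋ = (1, −1, 1)`. -/
def SigmaMinus : Fin 3 → ℝ := ![1, -1, 1]

/-- The reflection `ρ_Σ(x) = x + 2 B(x,Σ) Σ`. -/
def rho (S x : Fin 3 → ℝ) : Fin 3 → ℝ := x + (2 * interForm x S) • S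

/-- The matrix of `f_* = (ρ_{Σ₊} ∘ ρ_{Σ₋})_*` on `H₂(N)`. -/
def M : Matrix (Fin 3) (Fin 3) ℝ := !![9, 4, -8; 4, 1, -4; 8, 4, -7]

open Matrix in
theorem stmt1 :
    (∀ x : Fin 3 → ℝ, rho SigmaPlus (rho SigmaMinus x) = M.mulVec x) ∧
    Mᵀ * G * M = G ∧
    M.det = 1 ∧
    (∀ x : Fin 3 → ℝ, interForm x x > 0 → x 0 > 0 → M.mulVec x 0 > 0) := by
  refine ⟨?_, ?_, ?_, ?_⟩
  · intro x
    funext i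
    fin_cases i <;>
      simp [rho, interForm, SigmaPlus, SigmaMinus, M, Matrix.mulVec, dotProduct,
        Fin.sum_univ_three, Matrix.vecHead, Matrix.vecTail, Function.comp] <;> ring
  · ext i j
    fin_cases i <;> fin_cases j <;>
      simp [M, G, Matrix.mul_apply, Matrix.transpose, Fin.sum_univ_three, Matrix.vecHead, Matrix.vecTail] <;> norm_num
  · simp [M, Matrix.det_fin_three]
    norm_num
  · intro x h1 h2
    have hx : M.mulVec x 0 = 9 * x 0 + 4 * x 1 + (-8) * x 2 := by
      simp [M, Matrix.mulVec, dotProduct, Fin.sum_univ_three]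
    rw [hx]
    simp only [interForm] at h1
    nlinarith [sq_nonneg (2 * x 1 + x 2), mul_pos h2 h2, sq_nonneg (x 1 - 2 * x 2),
      sq_nonneg (9 * x 0 + 4 * x 1 - 8 * x 2)]
end

section
/- The fixed-point set {x ∈ ℝ³ : Mx = x} of the matrix M equals the line ℝ·(1,0,1) spanned by the vector (1,0,1), and this vector is isotropic for B, i.e. B((1,0,1),(1,0,1)) = 0. (Thus M, viewed as a transformation of the hyperbolic space H = {x ∈ ℝ³ : B(x,x) = 1, x₁ > 0}, is a parabolic element, with a unique fixed point on the boundary circle.) -/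
lemma M_mulVec_eq_self_iff (x : Fin 3 → ℝ) : M.mulVec x = x ↔ x 1 = 0 ∧ x 2 = x 0 := by
  simp only [M, Matrix.cons_mulVec, Matrix.empty_mulVec, dotProduct, Fin.sum_univ_three,
    funext_iff, Fin.forall_fin_succ, Fin.succ_zero_eq_one, Fin.succ_one_eq_two,
    IsEmpty.forall_iff, Matrix.cons_val_zero, Matrix.cons_val_one, Matrix.cons_val,
    Matrix.cons_val_succ, Matrix.cons_val_fin_one, and_true]
  constructor
  -- The rows of `M - 1` are `(8, 4, -8)`, `(4, 0, -4)`, `(8, 4, -8)`: the third repeats the first.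
  · rintro ⟨h0, h1, -⟩
    constructor <;> linarith
  · rintro ⟨h1, h2⟩
    rw [h1, h2]
    refine ⟨?_, ?_, ?_⟩ <;> ring

lemma exists_eq_smul_one_zero_one_iff (x : Fin 3 → ℝ) :
    (∃ t : ℝ, x = t • ![1, 0, 1]) ↔ x 1 = 0 ∧ x 2 = x 0 := by
  constructor
  · rintro ⟨t, rfl⟩
    simp
  · rintro ⟨h1, h2⟩
    refine ⟨x 0, funext fun i => ?_⟩
    fin_cases i <;> simp [h1, h2]

theorem stmt2 :
    {x : Fin 3 → ℝ | M.mulVec x = x} = {x : Fin 3 → ℝ | ∃ t : ℝ, x = t • ![1, 0, 1]} ∧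
    interForm ![1, 0, 1] ![1, 0, 1] = 0 := by
  refine ⟨Set.ext fun x => ?_, by simp [interForm]⟩
  exact (M_mulVec_eq_self_iff x).trans (exists_eq_smul_one_zero_one_iff x).symm
end

section
/- Let p be a positive integer, q an integer with gcd(q, 2p) = 1, and s any integer. Then (1/(2p)) · Σ_{λ ∈ ℂ, λ^{2p} = 1, λ ≠ 1} (λ^s − λ^{s+p})·λ^q / ((λ^q − 1)(λ − 1)) = (1/p) · Σ_{λ ∈ ℂ, λ^p = −1} λ^{s+q} / ((λ^q − 1)(λ − 1)), and all denominators appearing in both sums are nonzero. (This is the step expressing η(X(p), g_{p,q}, α_s) = ρ_{α_s}(L(2p,q)) − ρ_{α_{s+p}}(L(2p,q)) as a sum over the roots λ with λ^p = −1.) -/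
open Set in
/-- Rewriting `η(X(p), g_{p,q}, α_s) = ρ_{α_s}(L(2p,q)) − ρ_{α_{s+p}}(L(2p,q))` as a sum
over the roots `λ` with `λ^p = −1`; all denominators are nonzero. -/
theorem stmt5 (p : ℕ) (hp : 0 < p) (q s : ℤ) (hq : Int.gcd q (2 * p) = 1) :
    (∀ z : ℂ, z ^ (2 * p) = 1 → z ≠ 1 → z ^ q - 1 ≠ 0 ∧ z - 1 ≠ 0) ∧
    (∀ z : ℂ, z ^ p = -1 → z ^ q - 1 ≠ 0 ∧ z - 1 ≠ 0) ∧
    (1 / (2 * p : ℂ)) *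
        ∑ᶠ z ∈ {z : ℂ | z ^ (2 * p) = 1 ∧ z ≠ 1},
          (z ^ s - z ^ (s + (p : ℤ))) * z ^ q / ((z ^ q - 1) * (z - 1))
      = (1 / (p : ℂ)) *
        ∑ᶠ z ∈ {z : ℂ | z ^ p = -1},
          z ^ (s + q) / ((z ^ q - 1) * (z - 1)) := by
  have key : ∀ z : ℂ, z ^ (2 * p) = 1 → z ≠ 1 → z ^ q - 1 ≠ 0 ∧ z - 1 ≠ 0 := by
    intro z h2p hz1
    have hz0 : z ≠ 0 := by
      intro h; rw [h, zero_pow (by omega)] at h2p; exact one_ne_zero h2p.symm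
    refine ⟨?_, sub_ne_zero.mpr hz1⟩
    intro hzq
    have hzq1 : z ^ q = 1 := by linear_combination hzq
    have h2pz : z ^ (2 * (p : ℤ)) = 1 := by
      rw [show (2 * (p : ℤ)) = ((2 * p : ℕ) : ℤ) by push_cast; ring, zpow_natCast]
      exact h2p
    have hbez : (q : ℤ) * Int.gcdA q (2 * p) + (2 * (p : ℤ)) * Int.gcdB q (2 * p) = 1 := by
      have := Int.gcd_eq_gcd_ab q (2 * p)
      rw [hq] at this
      push_cast at this ⊢
      linarith
    have : z = 1 := by
      calc z = z ^ ((q : ℤ) * Int.gcdA q (2 * p) + (2 * (p : ℤ)) * Int.gcdB q (2 * p)) := by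
              rw [hbez, zpow_one]
        _ = (z ^ q) ^ Int.gcdA q (2 * p) * (z ^ (2 * (p : ℤ))) ^ Int.gcdB q (2 * p) := by
              rw [zpow_add₀ hz0, zpow_mul, zpow_mul]
        _ = 1 := by rw [hzq1, h2pz]; simp
    exact hz1 this
  have keyB : ∀ z : ℂ, z ^ p = -1 → z ^ q - 1 ≠ 0 ∧ z - 1 ≠ 0 := by
    intro z hzp
    have h2p : z ^ (2 * p) = 1 := by
      rw [two_mul, pow_add, hzp]; ring
    have hz1 : z ≠ 1 := by
      intro h; rw [h, one_pow] at hzp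
      exact two_ne_zero (α := ℂ) (by linear_combination hzp)
    exact key z h2p hz1
  refine ⟨key, keyB, ?_⟩
  set f : ℂ → ℂ := fun z => (z ^ s - z ^ (s + (p : ℤ))) * z ^ q / ((z ^ q - 1) * (z - 1)) with hf
  set g : ℂ → ℂ := fun z => z ^ (s + q) / ((z ^ q - 1) * (z - 1)) with hg
  have hBfin : {z : ℂ | z ^ p = -1}.Finite := by
    apply Set.Finite.subset (Polynomial.finite_setOf_isRoot
      (p := Polynomial.X ^ p - Polynomial.C (-1 : ℂ)) ?_)
    · intro z hz
      simp only [Set.mem_setOf_eq] at hz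
      simp only [Set.mem_setOf_eq, Polynomial.IsRoot, Polynomial.eval_sub,
        Polynomial.eval_pow, Polynomial.eval_X, Polynomial.eval_C, hz, sub_self]
    · intro h
      have h0 := congrArg (Polynomial.eval 0) h
      simp [zero_pow hp.ne'] at h0
  set T : Finset ℂ := hBfin.toFinset with hT
  have hsup : {z : ℂ | z ^ (2 * p) = 1 ∧ z ≠ 1} ∩ Function.support f
      = ↑T ∩ Function.support f := by
    ext z
    simp only [Set.mem_inter_iff, Set.mem_setOf_eq, Function.mem_support, hT,
      Set.Finite.coe_toFinset]
    constructor
    · rintro ⟨⟨h2p, hz1⟩, hfz⟩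
      refine ⟨?_, hfz⟩
      have hsq : (z ^ p - 1) * (z ^ p + 1) = 0 := by
        have : (z ^ p) ^ 2 = 1 := by rw [← pow_mul, mul_comm]; exact h2p
        linear_combination this
      rcases mul_eq_zero.mp hsq with h1 | h1
      · exfalso
        apply hfz
        have hz0 : z ≠ 0 := fun h => by
          rw [h, zero_pow (by omega)] at h2p; exact one_ne_zero h2p.symm
        have hzp1 : z ^ p = 1 := by linear_combination h1
        have : z ^ (s + (p : ℤ)) = z ^ s := by
          rw [zpow_add₀ hz0, zpow_natCast, hzp1, mul_one]
        simp [hf, this]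
      · linear_combination h1
    · rintro ⟨hzp, hfz⟩
      refine ⟨⟨?_, ?_⟩, hfz⟩
      · rw [two_mul, pow_add, hzp]; ring
      · intro h; rw [h, one_pow] at hzp
        exact two_ne_zero (α := ℂ) (by linear_combination hzp)
  rw [finsum_mem_eq_sum_of_inter_support_eq f hsup,
    finsum_mem_eq_finite_toFinset_sum g hBfin, ← hT]
  have hpt : ∀ z ∈ T, f z = 2 * g z := by
    intro z hz
    rw [hT, Set.Finite.mem_toFinset] at hz
    simp only [Set.mem_setOf_eq] at hz
    have hz0 : z ≠ 0 := fun h => by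
      rw [h, zero_pow hp.ne'] at hz
      exact absurd hz (by norm_num)
    have h1 : z ^ (s + (p : ℤ)) = -z ^ s := by
      rw [zpow_add₀ hz0, zpow_natCast, hz]; ring
    have h2 : z ^ (s + q) = z ^ s * z ^ q := zpow_add₀ hz0 s q
    simp only [hf, hg, h1, h2]
    ring
  rw [Finset.sum_congr rfl hpt, ← Finset.mul_sum, ← mul_assoc]
  have hpne : (p : ℂ) ≠ 0 := Nat.cast_ne_zero.mpr hp.ne'
  congr 1
  field_simp
end

section
/- Let p be a positive integer, q an integer with gcd(q, 2p) = 1, and s any integer, and suppose p and q are odd. Then (1/(2p)) · Σ_{λ ∈ ℂ, λ^{2p} = 1, λ ≠ 1} (λ^s − λ^{s+p})·λ^q / ((λ^q − 1)(λ − 1)) = (1/p) · Σ_{μ ∈ ℂ, μ^p = 1} (−1)^{s+1} μ^{s+q} / ((μ^q + 1)(μ + 1)), with all denominators nonzero. (This is the paper's closed formula for the η-invariant η(X(p), g_{p,q}, α_s) of the flip-spun lens space.) -/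
/-!
Every `2p`-th root of unity `z` has `z ^ p = ±1`. The summand on the left carries the factor
`z ^ s - z ^ (s + p) = z ^ s (1 - z ^ p)`, so it vanishes unless `z ^ p = -1`; since `p` is odd
these `z` are exactly the `-w` with `w ^ p = 1`, and substituting `z = -w` turns the summand into
twice the summand on the right (using that `q` is odd). The denominators are nonzero because a
root of unity whose order divides two coprime exponents is `1`.
-/

open Polynomial

theorem eq_one_of_zpow_eq_one_of_isCoprime {G₀ : Type*} [GroupWithZero G₀] {z : G₀} {a b : ℤ}
    (hab : IsCoprime a b) (ha : z ^ a = 1) (hb : z ^ b = 1) : z = 1 := by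
  rcases eq_or_ne z 0 with rfl | hz
  · rw [zero_zpow_eq_one₀] at ha hb
    exact absurd (ha ▸ hb ▸ hab) not_isCoprime_zero_zero
  obtain ⟨u, v, huv⟩ := hab
  calc z = z ^ (u * a + v * b) := by rw [huv, zpow_one]
    _ = (z ^ a) ^ u * (z ^ b) ^ v := by
      rw [zpow_add₀ hz, mul_comm u, mul_comm v, zpow_mul, zpow_mul]
    _ = 1 := by rw [ha, hb, one_zpow, one_zpow, one_mul]

theorem zpow_ne_neg_one_of_pow_eq_one {K : Type*} [Field K] [CharZero K] {z : K} {p : ℕ}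
    (hp : Odd p) {q : ℤ} (hq : IsCoprime q p) (hz : z ^ p = 1) : z ^ q ≠ -1 := by
  intro hzq
  have hcop : IsCoprime (2 * q) p := (Int.isCoprime_two_left.mpr hp.natCast).mul_left hq
  have hz1 : z = 1 :=
    eq_one_of_zpow_eq_one_of_isCoprime hcop (by rw [zpow_mul', hzq]; norm_num)
      (by exact_mod_cast hz)
  rw [hz1, one_zpow] at hzq
  norm_num at hzq

theorem sum_nthRootsFinset_two_mul_of_odd {K M : Type*} [CommRing K] [IsDomain K]
    [AddCommMonoid M] {p : ℕ} (hp : Odd p) {f : K → M} (hf : ∀ z, z ^ p = 1 → f z = 0) :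
    ∑ z ∈ nthRootsFinset (2 * p) (1 : K), f z = ∑ w ∈ nthRootsFinset p (1 : K), f (-w) := by
  classical
  have hp0 : 0 < p := hp.pos
  have h2p : 0 < 2 * p := by omega
  have pow_two_mul (z : K) : z ^ (2 * p) = (z ^ p) ^ 2 := by rw [← pow_mul, mul_comm]
  rw [← Finset.sum_filter_of_ne (p := fun z : K => z ^ p = -1)]
  · refine Finset.sum_nbij' (fun z => -z) (fun w => -w) ?_ ?_ (fun _ _ => neg_neg _)
      (fun _ _ => neg_neg _) (fun _ _ => by rw [neg_neg])
    · intro z hz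
      rw [Finset.mem_filter] at hz
      rw [mem_nthRootsFinset hp0, hp.neg_pow, hz.2, neg_neg]
    · intro w hw
      rw [mem_nthRootsFinset hp0] at hw
      have hneg : (-w) ^ p = -1 := by rw [hp.neg_pow, hw]
      rw [Finset.mem_filter, mem_nthRootsFinset h2p, pow_two_mul, hneg]
      exact ⟨by norm_num, rfl⟩
  · intro z hz hfz
    rw [mem_nthRootsFinset h2p, pow_two_mul, sq_eq_one_iff] at hz
    exact hz.resolve_left fun h => hfz (hf z h)

theorem summand_eq_zero_of_pow_eq_one {K : Type*} [Field K] {z : K} {p : ℕ} (hp : 0 < p)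
    (hz : z ^ p = 1) (q s : ℤ) :
    (z ^ s - z ^ (s + (p : ℤ))) * z ^ q / ((z ^ q - 1) * (z - 1)) = 0 := by
  have hz0 : z ≠ 0 := by rintro rfl; simp [hp.ne'] at hz
  rw [zpow_add₀ hz0, zpow_natCast, hz, mul_one, sub_self, zero_mul, zero_div]

theorem summand_neg_eq_two_mul {K : Type*} [Field K] {w : K} {p : ℕ} (hp : Odd p)
    (hw : w ^ p = 1) {q : ℤ} (hq : Odd q) (s : ℤ) :
    ((-w) ^ s - (-w) ^ (s + (p : ℤ))) * (-w) ^ q / (((-w) ^ q - 1) * (-w - 1)) =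
      2 * ((-1) ^ (s + 1) * w ^ (s + q) / ((w ^ q + 1) * (w + 1))) := by
  have hw0 : w ≠ 0 := by rintro rfl; simp [hp.pos.ne'] at hw
  have hneg : (-w) ^ (s + (p : ℤ)) = -(-w) ^ s := by
    rw [zpow_add₀ (neg_ne_zero.mpr hw0), zpow_natCast, hp.neg_pow, hw, mul_neg_one]
  rw [hneg, hq.neg_zpow, zpow_add₀ hw0, zpow_add₀ (by norm_num : (-1 : K) ≠ 0), zpow_one,
    neg_eq_neg_one_mul w, mul_zpow]
  ring

/-- The paper's closed formula for the η-invariant `η(X(p), g_{p,q}, α_s)` of the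
flip-spun lens space, for `p` and `q` odd; all denominators are nonzero. -/
theorem stmt7 (p : ℕ) (hp : 0 < p) (hpodd : Odd p) (q : ℤ) (hq : Int.gcd q (2 * p) = 1)
    (hqodd : Odd q) (s : ℤ) :
    (∀ z : ℂ, z ^ (2 * p) = 1 → z ≠ 1 → z ^ q - 1 ≠ 0 ∧ z - 1 ≠ 0) ∧
    (∀ z : ℂ, z ^ p = 1 → z ^ q + 1 ≠ 0 ∧ z + 1 ≠ 0) ∧
    (1 / (2 * p : ℂ)) *
        ∑ᶠ z ∈ {z : ℂ | z ^ (2 * p) = 1 ∧ z ≠ 1},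
          (z ^ s - z ^ (s + (p : ℤ))) * z ^ q / ((z ^ q - 1) * (z - 1))
      = (1 / (p : ℂ)) *
        ∑ᶠ z ∈ {z : ℂ | z ^ p = 1},
          (-1 : ℂ) ^ (s + 1) * z ^ (s + q) / ((z ^ q + 1) * (z + 1)) := by
  classical
  have hcop : IsCoprime q (2 * (p : ℤ)) := Int.isCoprime_iff_gcd_eq_one.mpr hq
  refine ⟨fun z hz hz1 => ⟨fun hzq => hz1 ?_, sub_ne_zero_of_ne hz1⟩,
    fun z hz => ⟨fun hzq => ?_, fun hz1 => ?_⟩, ?_⟩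
  · exact eq_one_of_zpow_eq_one_of_isCoprime hcop (sub_eq_zero.mp hzq) (by exact_mod_cast hz)
  · exact zpow_ne_neg_one_of_pow_eq_one hpodd hcop.of_mul_right_right hz
      (eq_neg_of_add_eq_zero_left hzq)
  · rw [eq_neg_of_add_eq_zero_left hz1, hpodd.neg_one_pow] at hz
    norm_num at hz
  · have hset₁ : {z : ℂ | z ^ (2 * p) = 1 ∧ z ≠ 1} =
        ↑((nthRootsFinset (2 * p) (1 : ℂ)).erase 1) := by
      ext z; simp [hp, and_comm]
    have hset₂ : {z : ℂ | z ^ p = 1} = ↑(nthRootsFinset p (1 : ℂ)) := by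
      ext z; simp [hp]
    rw [hset₁, hset₂, finsum_mem_coe_finset, finsum_mem_coe_finset, Finset.sum_erase _ (by simp),
      sum_nthRootsFinset_two_mul_of_odd hpodd
        fun z hz => summand_eq_zero_of_pow_eq_one hp hz q s,
      Finset.sum_congr rfl fun w hw =>
        summand_neg_eq_two_mul hpodd ((mem_nthRootsFinset hp 1).mp hw) hqodd s,
      ← Finset.mul_sum]
    field_simp
end

section
/- Let p be an odd positive integer, ω ∈ ℂ a primitive p-th root of unity, and let q, q′, b be integers each coprime to p. Suppose that for every j = 1, …, p−1 one has (ω^{−2jq} − 1)(ω^{2j} − 1) / ((ω^{−jq} − 1)(ω^{j} − 1)) = (ω^{−2bjq′} − 1)(ω^{2bj} − 1) / ((ω^{−bjq′} − 1)(ω^{bj} − 1)). Then q ≡ q′ (mod p) or q·q′ ≡ 1 (mod p). (This follows from Franz's independence lemma: there are no non-trivial multiplicative relations among the algebraic numbers ω^k − 1, so the factors on the two sides must match in pairs, forcing b ≡ 1 with q ≡ q′, or b ≡ −q with qq′ ≡ 1 mod p.) -/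
lemma quotAux (A C : ℂ) (hA : A ≠ 1) (hC : C ≠ 1) :
    (A*A - 1) * (C*C - 1) / ((A - 1) * (C - 1)) = (A+1)*(C+1) := by
  have hA' := sub_ne_zero.mpr hA
  have hC' := sub_ne_zero.mpr hC
  field_simp
  ring

lemma sumAux (p : ℕ) (ω : ℂ) (hω : IsPrimitiveRoot ω p) (c : ℤ) :
    (∑ j ∈ Finset.range p, ω ^ (c * (j:ℤ))) = if ((c : ZMod p) = 0) then (p:ℂ) else 0 := by
  have hrw : ∀ j : ℕ, ω ^ (c * (j:ℤ)) = (ω ^ c) ^ j := by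
    intro j; rw [zpow_mul, zpow_natCast]
  simp_rw [hrw]
  by_cases hc : (c : ZMod p) = 0
  · obtain ⟨d, rfl⟩ := (ZMod.intCast_zmod_eq_zero_iff_dvd c p).mp hc
    have h1 : ω ^ ((p:ℤ) * d) = 1 := (hω.zpow_eq_one_iff_dvd _).mpr ⟨d, rfl⟩
    simp [hc, h1]
  · have h1 : ω ^ c ≠ 1 := fun hh => hc ((ZMod.intCast_zmod_eq_zero_iff_dvd c p).mpr
      ((hω.zpow_eq_one_iff_dvd c).mp hh))
    have h2 : (ω ^ c) ^ p = 1 := by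
      rw [← zpow_natCast, ← zpow_mul, mul_comm, zpow_mul, zpow_natCast, hω.pow_eq_one, one_zpow]
    rw [geom_sum_eq h1, h2]
    simp [hc]

lemma sum2_ne {c : ℂ} (hc : c ≠ 0) {P : Prop} [Decidable P] :
    (if P then c else 0) + c ≠ 0 := by
  by_cases hP : P <;> simp [hP, add_self_eq_zero, hc]

lemma mul_ne {c : ℂ} (hc : c ≠ 0) (m : ℂ) (hm : m ≠ 0) (hh : m * c = 0) : False := by
  rcases mul_eq_zero.mp hh with h | h
  · exact hm h
  · exact hc h

lemma sum3_ne {c : ℂ} (hc : c ≠ 0) {P1 P2 : Prop} [Decidable P1] [Decidable P2] :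
    (if P1 then c else 0) + (if P2 then c else 0) + c ≠ 0 := by
  intro hh
  by_cases h1 : P1 <;> by_cases h2 : P2 <;> simp only [if_pos, if_neg, h1, h2, ite_true,
    ite_false, zero_add, add_zero] at hh
  · exact mul_ne hc 3 (by norm_num) (by linear_combination hh)
  · exact mul_ne hc 2 (by norm_num) (by linear_combination hh)
  · exact mul_ne hc 2 (by norm_num) (by linear_combination hh)
  · exact hc hh

/-- Franz's independence lemma applied to the equality of the Fourier coefficients of the
η-invariants: if all coefficients match (up to the unit `b`), then `q ≡ q′ (mod p)` or
`q·q′ ≡ 1 (mod p)`. -/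
theorem stmt10 (p : ℕ) (hp : 0 < p) (hpodd : Odd p) (ω : ℂ) (hω : IsPrimitiveRoot ω p)
    (q q' b : ℤ) (hq : Int.gcd q p = 1) (hq' : Int.gcd q' p = 1) (hb : Int.gcd b p = 1)
    (h : ∀ j : ℤ, 1 ≤ j → j ≤ (p : ℤ) - 1 →
      (ω ^ (-(2 * j * q)) - 1) * (ω ^ (2 * j) - 1) /
          ((ω ^ (-(j * q)) - 1) * (ω ^ j - 1))
        = (ω ^ (-(2 * b * j * q')) - 1) * (ω ^ (2 * b * j) - 1) /
            ((ω ^ (-(b * j * q')) - 1) * (ω ^ (b * j) - 1))) :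
    q ≡ q' [ZMOD (p : ℤ)] ∨ q * q' ≡ 1 [ZMOD (p : ℤ)] := by
  rcases eq_or_ne p 1 with hp1 | hp1
  · left
    simp [hp1, Int.ModEq]
  have hp3 : 3 ≤ p := by obtain ⟨m, hm⟩ := hpodd; omega
  have hω0 : ω ≠ 0 := fun h0 => by
    have := hω.pow_eq_one; rw [h0, zero_pow hp.ne'] at this; exact zero_ne_one this
  have hcq : IsCoprime (p:ℤ) q := Int.isCoprime_iff_gcd_eq_one.mpr (by rwa [Int.gcd_comm])
  have hcq' : IsCoprime (p:ℤ) q' := Int.isCoprime_iff_gcd_eq_one.mpr (by rwa [Int.gcd_comm])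
  have hcb : IsCoprime (p:ℤ) b := Int.isCoprime_iff_gcd_eq_one.mpr (by rwa [Int.gcd_comm])
  -- Step 1: product form of the hypothesis
  have hE : ∀ j : ℕ, j < p →
      ω ^ ((1-q) * (j:ℤ)) + ω ^ ((-q) * (j:ℤ)) + ω ^ ((1:ℤ) * (j:ℤ))
        = ω ^ ((b*(1-q')) * (j:ℤ)) + ω ^ ((-(b*q')) * (j:ℤ)) + ω ^ (b * (j:ℤ)) := by
    intro j hjp
    rcases Nat.eq_zero_or_pos j with rfl | hj1
    · simp
    have hnd : ¬ (p:ℤ) ∣ (j:ℤ) := by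
      intro hd
      have := Int.le_of_dvd (by exact_mod_cast hj1) hd
      omega
    have key := h j (by exact_mod_cast hj1) (by omega)
    set A : ℂ := ω ^ (-((j:ℤ) * q)) with hAdef
    set C : ℂ := ω ^ (j:ℤ) with hCdef
    set A' : ℂ := ω ^ (-(b * (j:ℤ) * q')) with hA'def
    set C' : ℂ := ω ^ (b * (j:ℤ)) with hC'def
    have hA : A ≠ 1 := fun hh => hnd (hcq.dvd_of_dvd_mul_right
      (Int.dvd_neg.mp ((hω.zpow_eq_one_iff_dvd _).mp hh)))
    have hC : C ≠ 1 := fun hh => hnd ((hω.zpow_eq_one_iff_dvd _).mp hh)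
    have hC' : C' ≠ 1 := fun hh => hnd (hcb.dvd_of_dvd_mul_left
      ((hω.zpow_eq_one_iff_dvd _).mp hh))
    have hA' : A' ≠ 1 := fun hh => hnd (hcb.dvd_of_dvd_mul_left
      (hcq'.dvd_of_dvd_mul_right (Int.dvd_neg.mp ((hω.zpow_eq_one_iff_dvd _).mp hh))))
    have e1 : ω ^ (-(2 * (j:ℤ) * q)) = A * A := by
      rw [hAdef, ← zpow_add₀ hω0]; congr 1; ring
    have e2 : ω ^ (2 * (j:ℤ)) = C * C := by
      rw [hCdef, ← zpow_add₀ hω0]; congr 1; ring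
    have e3 : ω ^ (-(2 * b * (j:ℤ) * q')) = A' * A' := by
      rw [hA'def, ← zpow_add₀ hω0]; congr 1; ring
    have e4 : ω ^ (2 * b * (j:ℤ)) = C' * C' := by
      rw [hC'def, ← zpow_add₀ hω0]; congr 1; ring
    rw [e1, e2, e3, e4, quotAux A C hA hC, quotAux A' C' hA' hC'] at key
    have f1 : ω ^ ((1-q) * (j:ℤ)) = A * C := by
      rw [hAdef, hCdef, ← zpow_add₀ hω0]; congr 1; ring
    have f2 : ω ^ ((-q) * (j:ℤ)) = A := by rw [hAdef]; congr 1; ring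
    have f3 : ω ^ ((1:ℤ) * (j:ℤ)) = C := by rw [hCdef]; congr 1; ring
    have f4 : ω ^ ((b*(1-q')) * (j:ℤ)) = A' * C' := by
      rw [hA'def, hC'def, ← zpow_add₀ hω0]; congr 1; ring
    have f5 : ω ^ ((-(b*q')) * (j:ℤ)) = A' := by rw [hA'def]; congr 1; ring
    rw [f1, f2, f3, f4, f5, mul_comm b (j:ℤ)] at *
    linear_combination key
  -- Step 2: Fourier coefficients
  have hI : ∀ k : ℤ,
      (if (((1-q-k : ℤ) : ZMod p) = 0) then (p:ℂ) else 0)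
        + (if (((-q-k : ℤ) : ZMod p) = 0) then (p:ℂ) else 0)
        + (if (((1-k : ℤ) : ZMod p) = 0) then (p:ℂ) else 0)
      = (if (((b*(1-q')-k : ℤ) : ZMod p) = 0) then (p:ℂ) else 0)
        + (if (((-(b*q')-k : ℤ) : ZMod p) = 0) then (p:ℂ) else 0)
        + (if (((b-k : ℤ) : ZMod p) = 0) then (p:ℂ) else 0) := by
    intro k
    rw [← sumAux p ω hω, ← sumAux p ω hω, ← sumAux p ω hω, ← sumAux p ω hω,
      ← sumAux p ω hω, ← sumAux p ω hω, ← Finset.sum_add_distrib, ← Finset.sum_add_distrib,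
      ← Finset.sum_add_distrib, ← Finset.sum_add_distrib]
    apply Finset.sum_congr rfl
    intro j hj
    have hEj := hE j (Finset.mem_range.mp hj)
    have g : ∀ c : ℤ, ω ^ ((c - k) * (j:ℤ)) = ω ^ (c * (j:ℤ)) * ω ^ ((-k) * (j:ℤ)) := by
      intro c; rw [← zpow_add₀ hω0]; congr 1; ring
    calc ω ^ ((1-q-k) * (j:ℤ)) + ω ^ ((-q-k) * (j:ℤ)) + ω ^ ((1-k) * (j:ℤ))
        = (ω ^ ((1-q) * (j:ℤ)) + ω ^ ((-q) * (j:ℤ)) + ω ^ ((1:ℤ) * (j:ℤ)))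
            * ω ^ ((-k) * (j:ℤ)) := by
          rw [show (1-q-k) = (1-q) - k by ring, show (-q-k) = (-q) - k by ring,
            show (1-k) = (1:ℤ) - k by ring, g, g, g]; ring
      _ = (ω ^ ((b*(1-q')) * (j:ℤ)) + ω ^ ((-(b*q')) * (j:ℤ)) + ω ^ (b * (j:ℤ)))
            * ω ^ ((-k) * (j:ℤ)) := by rw [hEj]
      _ = _ := by
          rw [show (b*(1-q')-k) = (b*(1-q')) - k by ring, show (-(b*q')-k) = (-(b*q')) - k by ring,
            show (b-k) = b - k by ring, g, g, g]; ring
  -- Step 3: pass to ZMod p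
  haveI : NeZero p := ⟨hp.ne'⟩
  haveI : Fact (1 < p) := ⟨by omega⟩
  have hpC : (p:ℂ) ≠ 0 := Nat.cast_ne_zero.mpr hp.ne'
  have hmap : ∀ x : ℤ, IsCoprime (p:ℤ) x → IsUnit ((x : ZMod p)) := by
    intro x hx
    have := hx.map (Int.castRingHom (ZMod p))
    simp only [map_intCast, map_natCast, Int.cast_natCast, ZMod.natCast_self] at this
    exact isCoprime_zero_left.mp this
  have huQ : IsUnit ((q : ZMod p)) := hmap q hcq
  have huQ' : IsUnit ((q' : ZMod p)) := hmap q' hcq'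
  have huB : IsUnit ((b : ZMod p)) := hmap b hcb
  have hu2 : IsUnit ((2 : ZMod p)) := by
    have := (ZMod.isUnit_iff_coprime 2 p).mpr (Nat.coprime_two_left.mpr hpodd)
    simpa using this
  have hunz : ∀ x : ZMod p, IsUnit x → x ≠ 0 := by
    intro x hx h0
    rw [h0] at hx
    exact zero_ne_one (isUnit_zero_iff.mp hx)
  have htwo : (2 : ZMod p) ≠ 0 := hunz _ hu2
  have hJ : ∀ κ : ZMod p,
      (if (1 - (q : ZMod p) - κ = 0) then (p:ℂ) else 0)
        + (if (-(q : ZMod p) - κ = 0) then (p:ℂ) else 0)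
        + (if (1 - κ = 0) then (p:ℂ) else 0)
      = (if ((b : ZMod p) * (1 - (q' : ZMod p)) - κ = 0) then (p:ℂ) else 0)
        + (if (-((b : ZMod p) * (q' : ZMod p)) - κ = 0) then (p:ℂ) else 0)
        + (if ((b : ZMod p) - κ = 0) then (p:ℂ) else 0) := by
    intro κ
    obtain ⟨k, rfl⟩ := ZMod.intCast_surjective κ
    have hIk := hI k
    push_cast at hIk
    exact hIk
  have hd1 : (b : ZMod p) * (1 - (q' : ZMod p)) - 1 = 0
      ∨ -((b : ZMod p) * (q' : ZMod p)) - 1 = 0 ∨ (b : ZMod p) - 1 = 0 := by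
    by_contra hcon
    push_neg at hcon
    obtain ⟨h4, h5, h6⟩ := hcon
    have hk := hJ 1
    rw [if_pos (show (1:ZMod p) - 1 = 0 by ring), if_neg h4, if_neg h5, if_neg h6] at hk
    simp only [add_zero] at hk
    exact sum3_ne hpC hk
  rcases hd1 with h4 | h5 | h6
  · -- case B(1-Q') = 1 : impossible
    exfalso
    have e1 : (b : ZMod p) * (1 - (q' : ZMod p)) = 1 := sub_eq_zero.mp h4
    have e2 : -((b : ZMod p) * (q' : ZMod p)) = 1 - (b : ZMod p) := by linear_combination h4
    have hK : ∀ κ : ZMod p,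
        (if (1 - (q : ZMod p) - κ = 0) then (p:ℂ) else 0)
          + (if (-(q : ZMod p) - κ = 0) then (p:ℂ) else 0)
        = (if (1 - (b : ZMod p) - κ = 0) then (p:ℂ) else 0)
          + (if ((b : ZMod p) - κ = 0) then (p:ℂ) else 0) := by
      intro κ
      have hk := hJ κ
      rw [e1, e2] at hk
      linear_combination hk
    have hdA : 1 - (b : ZMod p) - -(q : ZMod p) = 0 ∨ (b : ZMod p) - -(q : ZMod p) = 0 := by
      by_contra hcon
      push_neg at hcon
      have hk := hK (-(q : ZMod p))
      rw [if_pos (show -(q:ZMod p) - -(q:ZMod p) = 0 by ring), if_neg hcon.1, if_neg hcon.2] at hk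
      simp only [add_zero] at hk
      exact sum2_ne hpC hk
    have hdB : 1 - (b : ZMod p) - (1 - (q : ZMod p)) = 0
        ∨ (b : ZMod p) - (1 - (q : ZMod p)) = 0 := by
      by_contra hcon
      push_neg at hcon
      have hk := hK (1 - (q : ZMod p))
      rw [if_pos (show 1 - (q:ZMod p) - (1 - (q:ZMod p)) = 0 by ring),
        if_neg hcon.1, if_neg hcon.2, add_comm] at hk
      simp only [add_zero] at hk
      exact sum2_ne hpC hk
    rcases hdA with hA | hA <;> rcases hdB with hB | hB
    · exact one_ne_zero (α := ZMod p) (by linear_combination hA - hB)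
    · have h2Q : (2 : ZMod p) * (q : ZMod p) = 0 := by linear_combination hA + hB
      exact hunz _ huQ (hu2.mul_left_cancel (by rw [mul_zero]; exact h2Q))
    · have h2Q : (2 : ZMod p) * (q : ZMod p) = 0 := by linear_combination hA + hB
      exact hunz _ huQ (hu2.mul_left_cancel (by rw [mul_zero]; exact h2Q))
    · exact one_ne_zero (α := ZMod p) (by linear_combination hA - hB)
  · -- case -BQ' = 1 : leads to qq' = 1
    right
    have e1 : (b : ZMod p) * (1 - (q' : ZMod p)) = (b : ZMod p) + 1 := by linear_combination h5
    have e2 : -((b : ZMod p) * (q' : ZMod p)) = 1 := sub_eq_zero.mp h5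
    have hK : ∀ κ : ZMod p,
        (if (1 - (q : ZMod p) - κ = 0) then (p:ℂ) else 0)
          + (if (-(q : ZMod p) - κ = 0) then (p:ℂ) else 0)
        = (if ((b : ZMod p) + 1 - κ = 0) then (p:ℂ) else 0)
          + (if ((b : ZMod p) - κ = 0) then (p:ℂ) else 0) := by
      intro κ
      have hk := hJ κ
      rw [e1, e2] at hk
      linear_combination hk
    have hdA : (b : ZMod p) + 1 - -(q : ZMod p) = 0 ∨ (b : ZMod p) - -(q : ZMod p) = 0 := by
      by_contra hcon
      push_neg at hcon
      have hk := hK (-(q : ZMod p))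
      rw [if_pos (show -(q:ZMod p) - -(q:ZMod p) = 0 by ring), if_neg hcon.1, if_neg hcon.2] at hk
      simp only [add_zero] at hk
      exact sum2_ne hpC hk
    have hBQ : (b : ZMod p) + (q : ZMod p) = 0 := by
      rcases hdA with hA | hA
      · have hdB : (b : ZMod p) + 1 - (1 - (q : ZMod p)) = 0
            ∨ (b : ZMod p) - (1 - (q : ZMod p)) = 0 := by
          by_contra hcon
          push_neg at hcon
          have hk := hK (1 - (q : ZMod p))
          rw [if_pos (show 1 - (q:ZMod p) - (1 - (q:ZMod p)) = 0 by ring),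
            if_neg hcon.1, if_neg hcon.2, add_comm] at hk
          simp only [add_zero] at hk
          exact sum2_ne hpC hk
        rcases hdB with hB | hB
        · linear_combination hB
        · exfalso
          have h20 : (2 : ZMod p) = 0 := by linear_combination hA - hB
          exact htwo h20
      · linear_combination hA
    have hQQ' : (q : ZMod p) * (q' : ZMod p) = 1 := by linear_combination h5 + (q' : ZMod p) * hBQ
    have : ((q * q' : ℤ) : ZMod p) = ((1 : ℤ) : ZMod p) := by push_cast; exact hQQ'
    exact (ZMod.intCast_eq_intCast_iff _ _ p).mp this
  · -- case B = 1 : leads to q = q'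
    have hB1 : (b : ZMod p) = 1 := sub_eq_zero.mp h6
    have hK : ∀ κ : ZMod p,
        (if (1 - (q : ZMod p) - κ = 0) then (p:ℂ) else 0)
          + (if (-(q : ZMod p) - κ = 0) then (p:ℂ) else 0)
        = (if (1 - (q' : ZMod p) - κ = 0) then (p:ℂ) else 0)
          + (if (-(q' : ZMod p) - κ = 0) then (p:ℂ) else 0) := by
      intro κ
      have hk := hJ κ
      rw [hB1] at hk
      rw [show (1:ZMod p) * (1 - (q' : ZMod p)) - κ = 1 - (q' : ZMod p) - κ by ring] at hk
      rw [show -((1:ZMod p) * (q' : ZMod p)) - κ = -(q' : ZMod p) - κ by ring] at hk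
      linear_combination hk
    have hdA : 1 - (q' : ZMod p) - -(q : ZMod p) = 0 ∨ -(q' : ZMod p) - -(q : ZMod p) = 0 := by
      by_contra hcon
      push_neg at hcon
      have hk := hK (-(q : ZMod p))
      rw [if_pos (show -(q:ZMod p) - -(q:ZMod p) = 0 by ring), if_neg hcon.1, if_neg hcon.2] at hk
      simp only [add_zero] at hk
      exact sum2_ne hpC hk
    have hQQ' : (q : ZMod p) = (q' : ZMod p) := by
      rcases hdA with hA | hA
      · have hdB : 1 - (q' : ZMod p) - (1 - (q : ZMod p)) = 0
            ∨ -(q' : ZMod p) - (1 - (q : ZMod p)) = 0 := by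
          by_contra hcon
          push_neg at hcon
          have hk := hK (1 - (q : ZMod p))
          rw [if_pos (show 1 - (q:ZMod p) - (1 - (q:ZMod p)) = 0 by ring),
            if_neg hcon.1, if_neg hcon.2, add_comm] at hk
          simp only [add_zero] at hk
          exact sum2_ne hpC hk
        rcases hdB with hB | hB
        · linear_combination hB
        · exfalso
          exact htwo (by linear_combination hA - hB)
      · linear_combination hA
    exact Or.inl ((ZMod.intCast_eq_intCast_iff _ _ p).mp hQQ')
end

section
/- Let p be an odd positive integer and let q and q′ be integers coprime to 2p. For an integer s define E(q, s) = (1/p) · Σ_{λ ∈ ℂ, λ^p = 1} (−1)^{s+1} λ^{s+q} / ((λ^q + 1)(λ + 1)) (this is the η-invariant η(X(p), g_{p,q}, α_s)). If there exists an integer a coprime to 2p such that E(q, s) = E(q′, a·s) for every integer s, then q′ ≡ q (mod 2p) or q·q′ ≡ 1 (mod 2p). (This is the number-theoretic content of the theorem: if the metrics g_{p,q} and g_{p,q′} lie in the same component of the moduli space of positive scalar curvature metrics on X(p), so that their η-invariants agree up to a permutation s ↦ a·s of the Pin^c structures, then q′ ≡ q^{±1} (mod 2p).) -/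
/-!
Up to the sign `(-1)^(s+1)`, which the odd multiplier `a` does not change, `s ↦ p · E(q, s)` is
the discrete Fourier transform of `w_q(λ) = λ^q / ((λ^q + 1)(λ + 1))` on the `p`-th roots of
unity. Fourier inversion turns the hypothesis into `w_q(λ) = w_{q'}(λ^b)` with `a b ≡ 1 (mod p)`.
Clearing denominators and cancelling the common term `λ^(q+c)`, where `c = b q'`, gives
`λ^(q+c+b) + λ^(q+b) + λ^q = λ^(c+q+1) + λ^(c+1) + λ^c` for every `λ`, so by orthogonality of
characters the two exponent multisets agree modulo `p`. Of the six ways to match them, four force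
`2 ≡ 0` or `2q ≡ 0 (mod p)`, and the other two give `q' ≡ q` or `q q' ≡ 1 (mod p)`; since `q` and
`q'` are odd, these congruences hold modulo `2p`.
-/

/-- The η-invariant `η(X(p), g_{p,q}, α_s)` of the Pin^c Dirac operator on the flip-spun
lens space `X(p)` with the metric `g_{p,q}`, twisted by the `U(1)` representation `α_s`. -/
noncomputable def etaInv (p : ℕ) (q s : ℤ) : ℂ :=
  (1 / (p : ℂ)) *
    ∑ᶠ z ∈ {z : ℂ | z ^ p = 1},
      (-1 : ℂ) ^ (s + 1) * z ^ (s + q) / ((z ^ q + 1) * (z + 1))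

open Polynomial Finset

namespace Multiset

variable {α : Type*}

theorem pair_eq_pair {a b c d : α} (h : ({a, b} : Multiset α) = {c, d}) :
    a = c ∧ b = d ∨ a = d ∧ b = c := by
  have ha : a ∈ ({c, d} : Multiset α) := h ▸ mem_cons_self a _
  rcases mem_cons.1 ha with rfl | ha
  · exact .inl ⟨rfl, singleton_inj.1 (cons_inj_right a |>.1 h)⟩
  · rw [mem_singleton.1 ha, pair_comm c] at h
    exact .inr ⟨mem_singleton.1 ha, singleton_inj.1 (cons_inj_right d |>.1 h)⟩

theorem triple_eq_triple {a₁ a₂ a₃ b₁ b₂ b₃ : α}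
    (h : ({a₁, a₂, a₃} : Multiset α) = {b₁, b₂, b₃}) :
    a₁ = b₁ ∧ ({a₂, a₃} : Multiset α) = {b₂, b₃} ∨ a₁ = b₂ ∧ ({a₂, a₃} : Multiset α) = {b₁, b₃} ∨
      a₁ = b₃ ∧ ({a₂, a₃} : Multiset α) = {b₁, b₂} := by
  have ha : a₁ ∈ ({b₁, b₂, b₃} : Multiset α) := h ▸ mem_cons_self a₁ _
  simp only [insert_eq_cons, mem_cons, mem_singleton] at ha h ⊢
  rcases ha with rfl | rfl | rfl
  · exact .inl ⟨rfl, cons_inj_right a₁ |>.1 h⟩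
  · rw [cons_swap b₁] at h
    exact .inr <| .inl ⟨rfl, cons_inj_right a₁ |>.1 h⟩
  · rw [← cons_zero, ← cons_zero, cons_swap b₂, cons_swap b₁, cons_zero] at h
    exact .inr <| .inr ⟨rfl, cons_inj_right a₁ |>.1 h⟩

end Multiset

theorem eq_or_mul_eq_one_of_multiset_eq {R : Type*} [CommRing R] {x y b : R}
    (h2 : IsUnit (2 : R)) (hx : IsUnit x)
    (h : ({x + b * y + b, x + b, x} : Multiset R) = {b * y + x + 1, b * y + 1, b * y}) :
    y = x ∨ x * y = 1 := by
  -- the four degenerate matchings give `2 * x = 0`, impossible for a unit outside the zero ring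
  have degenerate : 2 * x = 0 → y = x ∨ x * y = 1 := fun h0 => by
    have := isUnit_zero_iff.1 (h0 ▸ h2.mul hx)
    exact .inl (subsingleton_of_zero_eq_one this |>.elim y x)
  rcases Multiset.triple_eq_triple h with ⟨h₁, h'⟩ | ⟨h₁, h'⟩ | ⟨h₁, h'⟩ <;>
    rcases Multiset.pair_eq_pair h' with ⟨h₂, h₃⟩ | ⟨h₂, h₃⟩
  · exact .inl (by linear_combination -h₃ - y * h₁)
  · exact degenerate (by linear_combination x * (h₂ - h₁ - h₃))
  · exact degenerate (by linear_combination h₁ - h₂ + h₃)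
  · exact degenerate (by linear_combination x * (h₂ - h₁ - h₃))
  · exact degenerate (by linear_combination h₁ - h₂ + h₃)
  · exact .inr (by linear_combination h₃ + y * h₁)

theorem Int.modEq_two_mul_of_odd {p : ℕ} (hp : Odd p) {x y : ℤ} (hx : Odd x) (hy : Odd y)
    (h : x ≡ y [ZMOD p]) : x ≡ y [ZMOD 2 * p] := by
  have h2 : x ≡ y [ZMOD 2] := (Int.odd_iff.1 hx).trans (Int.odd_iff.1 hy).symm
  exact (Int.modEq_and_modEq_iff_modEq_mul (by simpa using Nat.coprime_two_left.2 hp)).1 ⟨h2, h⟩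

theorem Int.odd_of_gcd_two_mul_eq_one {x : ℤ} {n : ℕ} (h : Int.gcd x (2 * n) = 1) : Odd x := by
  refine Int.not_even_iff_odd.1 fun he => ?_
  have := Int.dvd_gcd he.two_dvd (dvd_mul_right (2 : ℤ) n)
  rw [h] at this
  norm_num at this

section RootsOfUnity

variable {K : Type*} [Field K] {p : ℕ} [NeZero p]

theorem zpow_mem_nthRootsFinset {z : K} (hz : z ∈ nthRootsFinset p (1 : K)) (k : ℤ) :
    z ^ k ∈ nthRootsFinset p (1 : K) := by
  rw [mem_nthRootsFinset (NeZero.pos p)] at hz ⊢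
  rw [← zpow_natCast, ← zpow_mul, mul_comm, zpow_mul, zpow_natCast, hz, one_zpow]

theorem inv_mem_nthRootsFinset {z : K} (hz : z ∈ nthRootsFinset p (1 : K)) :
    z⁻¹ ∈ nthRootsFinset p (1 : K) := by
  rw [mem_nthRootsFinset (NeZero.pos p)] at hz ⊢
  rw [inv_pow, hz, inv_one]

theorem zpow_eq_zpow_of_mem_nthRootsFinset {z : K} (hz : z ∈ nthRootsFinset p (1 : K))
    {k l : ℤ} (h : k ≡ l [ZMOD p]) : z ^ k = z ^ l := by
  obtain ⟨t, ht⟩ := Int.modEq_iff_dvd.1 h.symm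
  rw [show k = l + p * t by omega, zpow_add₀ (ne_zero_of_mem_nthRootsFinset one_ne_zero hz),
    zpow_mul, zpow_natCast, (mem_nthRootsFinset (NeZero.pos p) _).1 hz, one_zpow, mul_one]

theorem add_one_ne_zero_of_mem_nthRootsFinset [CharZero K] (hp : Odd p) {z : K}
    (hz : z ∈ nthRootsFinset p (1 : K)) : z + 1 ≠ 0 := fun h => by
  rw [mem_nthRootsFinset (NeZero.pos p), eq_neg_of_add_eq_zero_left h, hp.neg_one_pow] at hz
  norm_num at hz

theorem sum_range_pow_eq_zero_of_mem_nthRootsFinset {u : K} (hu : u ∈ nthRootsFinset p (1 : K))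
    (hu1 : u ≠ 1) : ∑ s ∈ range p, u ^ s = 0 := by
  have h := geom_sum_mul u p
  rw [(mem_nthRootsFinset (NeZero.pos p) _).1 hu, sub_self] at h
  exact (mul_eq_zero.1 h).resolve_right (sub_ne_zero.2 hu1)

theorem sum_nthRootsFinset_mul_left {M : Type*} [AddCommMonoid M] {w : K}
    (hw : w ∈ nthRootsFinset p (1 : K)) (f : K → M) :
    ∑ z ∈ nthRootsFinset p (1 : K), f (w * z) = ∑ z ∈ nthRootsFinset p (1 : K), f z := by
  have hw0 := ne_zero_of_mem_nthRootsFinset one_ne_zero hw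
  refine sum_nbij' (w * ·) (w⁻¹ * ·) (fun z hz => ?_) (fun z hz => ?_) (fun z _ => ?_)
    (fun z _ => ?_) fun _ _ => rfl
  · simpa only [mul_one] using mul_mem_nthRootsFinset hw hz
  · simpa only [mul_one] using mul_mem_nthRootsFinset (inv_mem_nthRootsFinset hw) hz
  · simp [hw0]
  · simp [hw0]

theorem sum_nthRootsFinset_comp_zpow {M : Type*} [AddCommMonoid M] {a b : ℤ}
    (hab : a * b ≡ 1 [ZMOD p]) (f : K → M) :
    ∑ z ∈ nthRootsFinset p (1 : K), f (z ^ b) = ∑ z ∈ nthRootsFinset p (1 : K), f z := by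
  have hinv : ∀ {k l : ℤ}, k * l ≡ 1 [ZMOD p] → ∀ z ∈ nthRootsFinset p (1 : K), (z ^ k) ^ l = z :=
    fun hkl z hz => by rw [← zpow_mul, zpow_eq_zpow_of_mem_nthRootsFinset hz hkl, zpow_one]
  exact sum_nbij' (· ^ b) (· ^ a) (fun z hz => zpow_mem_nthRootsFinset hz b)
    (fun z hz => zpow_mem_nthRootsFinset hz a) (hinv (by rwa [mul_comm]))
    (hinv hab) fun _ _ => rfl

theorem sum_nthRootsFinset_zpow {ζ : K} (hζ : IsPrimitiveRoot ζ p) (e : ℤ) :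
    ∑ z ∈ nthRootsFinset p (1 : K), z ^ e = if (p : ℤ) ∣ e then (p : K) else 0 := by
  split_ifs with he
  · have h1 : ∀ z ∈ nthRootsFinset p (1 : K), z ^ e = 1 := fun z hz => by
      rw [zpow_eq_zpow_of_mem_nthRootsFinset hz (Int.modEq_zero_iff_dvd.2 he), zpow_zero]
    rw [sum_congr rfl h1, sum_const, hζ.card_nthRootsFinset, nsmul_one]
  · have hζe : ζ ^ e ≠ 1 := fun h => he ((hζ.zpow_eq_one_iff_dvd e).1 h)
    have hshift := sum_nthRootsFinset_mul_left (hζ.mem_nthRootsFinset (NeZero.pos p)) (· ^ e)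
    simp only [mul_zpow, ← mul_sum] at hshift
    have : (ζ ^ e - 1) * ∑ z ∈ nthRootsFinset p (1 : K), z ^ e = 0 := by
      linear_combination hshift
    exact (mul_eq_zero.1 this).resolve_left (sub_ne_zero.2 hζe)

theorem sum_range_inv_pow_mul_sum_nthRootsFinset {w : K} (hw : w ∈ nthRootsFinset p (1 : K))
    (F : K → K) :
    ∑ s ∈ range p, w⁻¹ ^ s * ∑ z ∈ nthRootsFinset p (1 : K), z ^ s * F z = p * F w := by
  have hw0 := ne_zero_of_mem_nthRootsFinset one_ne_zero hw
  calc ∑ s ∈ range p, w⁻¹ ^ s * ∑ z ∈ nthRootsFinset p (1 : K), z ^ s * F z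
      = ∑ z ∈ nthRootsFinset p (1 : K), F z * ∑ s ∈ range p, (w⁻¹ * z) ^ s := by
        simp only [mul_sum]
        rw [sum_comm]
        exact sum_congr rfl fun z _ => sum_congr rfl fun s _ => by ring
    _ = F w * ∑ s ∈ range p, (w⁻¹ * w) ^ s := by
        refine sum_eq_single_of_mem w hw fun z hz hzw => ?_
        have hmem : w⁻¹ * z ∈ nthRootsFinset p (1 : K) := by
          simpa only [mul_one] using mul_mem_nthRootsFinset (inv_mem_nthRootsFinset hw) hz
        have hne : w⁻¹ * z ≠ 1 := fun h => hzw ((inv_mul_eq_one₀ hw0).1 h).symm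
        rw [sum_range_pow_eq_zero_of_mem_nthRootsFinset hmem hne, mul_zero]
    _ = p * F w := by simp [hw0, mul_comm]

theorem eqOn_nthRootsFinset_of_sum_pow_mul_eq [CharZero K] {f g : K → K}
    (h : ∀ s : ℕ, ∑ z ∈ nthRootsFinset p (1 : K), z ^ s * f z
      = ∑ z ∈ nthRootsFinset p (1 : K), z ^ s * g z) :
    Set.EqOn f g (nthRootsFinset p (1 : K)) := fun w hw => by
  have hf := sum_range_inv_pow_mul_sum_nthRootsFinset hw f
  simp only [h, sum_range_inv_pow_mul_sum_nthRootsFinset hw g] at hf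
  exact mul_left_cancel₀ (Nat.cast_ne_zero.2 (NeZero.ne p)) hf.symm

theorem sum_nthRootsFinset_zpow_neg_mul_sum_map {ζ : K} (hζ : IsPrimitiveRoot ζ p)
    (m : Multiset ℤ) (k : ℤ) :
    ∑ z ∈ nthRootsFinset p (1 : K), z ^ (-k) * (m.map (z ^ ·)).sum
      = p * (m.map (Int.cast : ℤ → ZMod p)).count (k : ZMod p) := by
  induction m using Multiset.induction_on with
  | empty => simp
  | cons e m ih =>
    have hsum : ∑ z ∈ nthRootsFinset p (1 : K), z ^ (-k) * z ^ e
        = ∑ z ∈ nthRootsFinset p (1 : K), z ^ (e - k) :=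
      sum_congr rfl fun z hz => by
        rw [← zpow_add₀ (ne_zero_of_mem_nthRootsFinset one_ne_zero hz), neg_add_eq_sub]
    simp only [Multiset.map_cons, Multiset.sum_cons, Multiset.count_cons, mul_add, sum_add_distrib,
      ih, hsum, sum_nthRootsFinset_zpow hζ, ZMod.intCast_eq_intCast_iff_dvd_sub]
    split_ifs <;> push_cast <;> ring

theorem map_intCast_eq_of_sum_map_zpow_eq [CharZero K] {ζ : K} (hζ : IsPrimitiveRoot ζ p)
    {m m' : Multiset ℤ}
    (h : ∀ z ∈ nthRootsFinset p (1 : K), (m.map (z ^ ·)).sum = (m'.map (z ^ ·)).sum) :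
    m.map (Int.cast : ℤ → ZMod p) = m'.map Int.cast := by
  refine Multiset.ext' fun t => ?_
  obtain ⟨k, rfl⟩ := ZMod.intCast_surjective t
  have hcount := sum_nthRootsFinset_zpow_neg_mul_sum_map hζ m k
  rw [sum_congr rfl fun z hz => by rw [h z hz], sum_nthRootsFinset_zpow_neg_mul_sum_map hζ]
    at hcount
  exact_mod_cast mul_left_cancel₀ (Nat.cast_ne_zero.2 (NeZero.ne p)) hcount.symm

end RootsOfUnity

noncomputable def etaWeight (q : ℤ) (z : ℂ) : ℂ :=
  z ^ q / ((z ^ q + 1) * (z + 1))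

section EtaInvariant

variable {p : ℕ} [NeZero p]

theorem etaInv_eq_sum (q s : ℤ) :
    etaInv p q s
      = (-1) ^ (s + 1) / p * ∑ z ∈ nthRootsFinset p (1 : ℂ), z ^ s * etaWeight q z := by
  have hset : {z : ℂ | z ^ p = 1} = ↑(nthRootsFinset p (1 : ℂ)) := by
    ext z
    simp [mem_nthRootsFinset (NeZero.pos p)]
  rw [etaInv, hset, finsum_mem_coe_finset, mul_sum, mul_sum]
  refine sum_congr rfl fun z hz => ?_
  rw [etaWeight, zpow_add₀ (ne_zero_of_mem_nthRootsFinset one_ne_zero hz)]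
  ring

theorem etaWeight_eq_of_etaInv_eq {q q' a b : ℤ} (ha : Odd a) (hab : a * b ≡ 1 [ZMOD p])
    (h : ∀ s : ℤ, etaInv p q s = etaInv p q' (a * s)) :
    Set.EqOn (etaWeight q) (fun z => etaWeight q' (z ^ b)) (nthRootsFinset p (1 : ℂ)) := by
  refine eqOn_nthRootsFinset_of_sum_pow_mul_eq fun s => ?_
  have hsign : (-1 : ℂ) ^ (a * s + 1) = (-1) ^ ((s : ℤ) + 1) := by
    rw [zpow_add_one₀ (by norm_num), zpow_add_one₀ (by norm_num), zpow_mul, ha.neg_one_zpow]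
  have hs := h s
  rw [etaInv_eq_sum, etaInv_eq_sum, hsign] at hs
  have hc : (-1 : ℂ) ^ ((s : ℤ) + 1) / p ≠ 0 :=
    div_ne_zero (zpow_ne_zero _ (by norm_num)) (Nat.cast_ne_zero.2 (NeZero.ne p))
  calc ∑ z ∈ nthRootsFinset p (1 : ℂ), z ^ s * etaWeight q z
      = ∑ z ∈ nthRootsFinset p (1 : ℂ), z ^ (a * s) * etaWeight q' z := by
        simpa only [zpow_natCast] using mul_left_cancel₀ hc hs
    _ = ∑ z ∈ nthRootsFinset p (1 : ℂ), (z ^ b) ^ (a * s) * etaWeight q' (z ^ b) :=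
        (sum_nthRootsFinset_comp_zpow hab _).symm
    _ = ∑ z ∈ nthRootsFinset p (1 : ℂ), z ^ s * etaWeight q' (z ^ b) := by
        refine sum_congr rfl fun z hz => ?_
        have hexp : b * (a * s) ≡ s [ZMOD p] := by
          rw [mul_left_comm, ← mul_assoc]
          simpa using hab.mul_right (s : ℤ)
        rw [← zpow_mul, zpow_eq_zpow_of_mem_nthRootsFinset hz hexp, zpow_natCast]

theorem sum_map_zpow_eq_of_etaWeight_eq (hp : Odd p) {q q' b : ℤ} {z : ℂ}
    (hz : z ∈ nthRootsFinset p (1 : ℂ)) (h : etaWeight q z = etaWeight q' (z ^ b)) :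
    (({q + b * q' + b, q + b, q} : Multiset ℤ).map (z ^ ·)).sum
      = (({b * q' + q + 1, b * q' + 1, b * q'} : Multiset ℤ).map (z ^ ·)).sum := by
  have hden : ∀ k : ℤ, z ^ k + 1 ≠ 0 := fun k =>
    add_one_ne_zero_of_mem_nthRootsFinset hp (zpow_mem_nthRootsFinset hz k)
  have hz1 : z + 1 ≠ 0 := add_one_ne_zero_of_mem_nthRootsFinset hp hz
  rw [etaWeight, etaWeight, ← zpow_mul,
    div_eq_div_iff (mul_ne_zero (hden q) hz1) (mul_ne_zero (hden _) (hden b))] at h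
  simp only [Multiset.insert_eq_cons, Multiset.map_cons, Multiset.map_singleton,
    Multiset.sum_cons, Multiset.sum_singleton,
    zpow_add₀ (ne_zero_of_mem_nthRootsFinset one_ne_zero hz), zpow_one]
  linear_combination h

end EtaInvariant

/-- If the η-invariants of `g_{p,q}` and `g_{p,q′}` agree up to a permutation `s ↦ a·s`
of the Pin^c structures, then `q′ ≡ q^{±1} (mod 2p)`. -/
theorem stmt11 (p : ℕ) (hp : 0 < p) (hpodd : Odd p) (q q' : ℤ)
    (hq : Int.gcd q (2 * p) = 1) (hq' : Int.gcd q' (2 * p) = 1)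
    (h : ∃ a : ℤ, Int.gcd a (2 * p) = 1 ∧ ∀ s : ℤ, etaInv p q s = etaInv p q' (a * s)) :
    q' ≡ q [ZMOD (2 * p : ℤ)] ∨ q * q' ≡ 1 [ZMOD (2 * p : ℤ)] := by
  obtain ⟨a, ha, hae⟩ := h
  have : NeZero p := ⟨hp.ne'⟩
  have hqodd := Int.odd_of_gcd_two_mul_eq_one hq
  have hq'odd := Int.odd_of_gcd_two_mul_eq_one hq'
  obtain ⟨b, v, hbv⟩ := (Int.isCoprime_iff_gcd_eq_one.2 ha).of_mul_right_right
  have hab : a * b ≡ 1 [ZMOD p] := Int.modEq_iff_dvd.2 ⟨v, by linear_combination -hbv⟩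
  have hM := map_intCast_eq_of_sum_map_zpow_eq (Complex.isPrimitiveRoot_exp p hp.ne')
    fun z hz => sum_map_zpow_eq_of_etaWeight_eq hpodd hz
      (etaWeight_eq_of_etaInv_eq (Int.odd_of_gcd_two_mul_eq_one ha) hab hae hz)
  simp only [Multiset.insert_eq_cons, Multiset.map_cons, Multiset.map_singleton, Int.cast_add,
    Int.cast_mul, Int.cast_one] at hM
  have h2 : IsUnit (2 : ZMod p) := by
    simpa using (ZMod.isUnit_iff_coprime 2 p).2 (Nat.coprime_two_left.2 hpodd)
  have hqu : IsUnit (q : ZMod p) := (ZMod.coe_int_isUnit_iff_isCoprime q p).2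
    (Int.isCoprime_iff_gcd_eq_one.2 hq).of_mul_right_right.symm
  rcases eq_or_mul_eq_one_of_multiset_eq h2 hqu hM with hmod | hmod
  · exact .inl <| Int.modEq_two_mul_of_odd hpodd hq'odd hqodd <|
      (ZMod.intCast_eq_intCast_iff _ _ _).1 hmod
  · exact .inr <| Int.modEq_two_mul_of_odd hpodd (hqodd.mul hq'odd) odd_one <|
      (ZMod.intCast_eq_intCast_iff _ _ _).1 (by push_cast; exact hmod)
end
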